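/- For every positive integer m, Thompson's group T = T_2 contains an element of order exactly m. -/

import Mathlib

/-!
Cut the circle at the dyadic points `1 - 2⁻ʲ`, `0 ≤ j ≤ M + 1`, into `M + 2` arcs. The map
`x ↦ (x + 1) / 2` sends each of the first `M` arcs affinely onto the next one; completing it by a
translation and by a piece of slope `2ᴹ` gives an element of `T` that permutes the arcs
cyclically. Its lift `F` moves every point forward and satisfies `F^[M + 2] = (· + 1)`, so the
element has order exactly `M + 2`; order `1` is realised by the identity.
-/

noncomputable section

namespace ThompsonPaper

/-- The circle `ℝ/ℤ`. -/
abbrev Circle : Type := AddCircle (1 : ℝ)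

/-- Homeomorphisms of a topological space form a group under composition,
with `(f * g) x = f (g x)`. -/
instance homeoGroup {α : Type*} [TopologicalSpace α] : Group (α ≃ₜ α) where
  mul f g := g.trans f
  one := Homeomorph.refl α
  inv := Homeomorph.symm
  mul_assoc _ _ _ := Homeomorph.ext fun _ => rfl
  one_mul _ := Homeomorph.ext fun _ => rfl
  mul_one _ := Homeomorph.ext fun _ => rfl
  inv_mul_cancel f := Homeomorph.ext fun x => f.symm_apply_apply x

/-- `x` is an `n`-adic rational: `x = a / n ^ k` with `a` an integer, `k` a natural number. -/
def IsNAdic (n : ℕ) (x : ℝ) : Prop := ∃ a : ℤ, ∃ k : ℕ, x = (a : ℝ) / (n : ℝ) ^ k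

/-- The set of `n`-adic points of the circle. -/
def nAdicPoints (n : ℕ) : Set Circle := { p | ∃ x : ℝ, IsNAdic n x ∧ p = (x : Circle) }

/-- `F : ℝ → ℝ` is a lift of the circle map `f`. -/
def IsLift (f : Circle ≃ₜ Circle) (F : ℝ → ℝ) : Prop :=
  ∀ x : ℝ, f (x : Circle) = ((F x : ℝ) : Circle)

/-- `F : ℝ → ℝ` commutes with translation by `1` and is piecewise affine with finitely
many breakpoints (modulo `1`), all breakpoints at `n`-adic rationals, and with the slope
of every affine piece an integer power of `n`. -/
def PiecewiseNAffine (n : ℕ) (F : ℝ → ℝ) : Prop :=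
  (∀ x : ℝ, F (x + 1) = F x + 1) ∧
  ∃ m : ℕ, ∃ t : ℕ → ℝ, ∃ slope : ℕ → ℤ, ∃ c : ℕ → ℝ,
    0 < m ∧ t 0 = 0 ∧ t m = 1 ∧
    (∀ i, i < m → t i < t (i + 1)) ∧
    (∀ i, i ≤ m → IsNAdic n (t i)) ∧
    (∀ i, i < m → ∀ x ∈ Set.Icc (t i) (t (i + 1)),
      F x = (n : ℝ) ^ (slope i) * x + c i)

/-- Membership in Thompson's group `T_n`: an orientation-preserving homeomorphism of the
circle `ℝ/ℤ` mapping the set of `n`-adic points onto itself, which is piecewise affine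
with finitely many breakpoints, all breakpoints at `n`-adic points, and all slopes integer
powers of `n`.  (Orientation preservation and the piecewise affine structure are expressed
through a strictly increasing lift.) -/
def InT (n : ℕ) (f : Circle ≃ₜ Circle) : Prop :=
  f '' nAdicPoints n = nAdicPoints n ∧
  ∃ F : ℝ → ℝ, StrictMono F ∧ IsLift f F ∧ PiecewiseNAffine n F

/-- Thompson's group `T_n`, as a set of circle homeomorphisms. -/
def TnSet (n : ℕ) : Set (Circle ≃ₜ Circle) := { f | InT n f }

open Set Function

section NAdic

variable (n : ℕ) [NeZero n]

def nAdicSubring : Subring ℝ where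
  carrier := {x | IsNAdic n x}
  mul_mem' := by
    rintro _ _ ⟨a, k, rfl⟩ ⟨b, l, rfl⟩
    exact ⟨a * b, k + l, by push_cast; ring⟩
  one_mem' := ⟨1, 0, by simp⟩
  add_mem' := by
    rintro _ _ ⟨a, k, rfl⟩ ⟨b, l, rfl⟩
    have hn : (n : ℝ) ≠ 0 := NeZero.ne _
    exact ⟨a * n ^ l + b * n ^ k, k + l, by field_simp; push_cast; ring⟩
  zero_mem' := ⟨0, 0, by simp⟩
  neg_mem' := by
    rintro _ ⟨a, k, rfl⟩
    exact ⟨-a, k, by push_cast; ring⟩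

variable {n}

lemma mem_nAdicSubring {x : ℝ} : x ∈ nAdicSubring n ↔ IsNAdic n x := Iff.rfl

lemma zpow_mem_nAdicSubring (s : ℤ) : (n : ℝ) ^ s ∈ nAdicSubring n := by
  cases s with
  | ofNat k => exact ⟨n ^ k, 0, by simp⟩
  | negSucc k => exact ⟨1, k + 1, by simp [zpow_negSucc]⟩

lemma affine_mem_nAdicSubring_iff (s : ℤ) {c : ℝ} (hc : c ∈ nAdicSubring n) (x : ℝ) :
    (n : ℝ) ^ s * x + c ∈ nAdicSubring n ↔ x ∈ nAdicSubring n := by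
  have hn : (n : ℝ) ≠ 0 := NeZero.ne _
  rw [add_mem_cancel_right hc]
  refine ⟨fun h => ?_, mul_mem (zpow_mem_nAdicSubring s)⟩
  simpa [← mul_assoc, inv_mul_cancel₀ (zpow_ne_zero s hn)] using
    mul_mem (zpow_mem_nAdicSubring (-s)) h

end NAdic

section Lifts

variable {f g : Circle ≃ₜ Circle} {F G : ℝ → ℝ}

lemma IsLift.mul (hf : IsLift f F) (hg : IsLift g G) : IsLift (f * g) (F ∘ G) := fun x => by
  change f (g x) = _
  rw [hg, hf, comp_apply]

lemma IsLift.pow (hf : IsLift f F) : ∀ k : ℕ, IsLift (f ^ k) F^[k]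
  | 0 => fun _ => rfl
  | k + 1 => by rw [pow_succ', iterate_succ']; exact hf.mul (hf.pow k)

lemma IsLift.image_nAdicPoints {n : ℕ} (hf : IsLift f F) (hF : Surjective F)
    (hD : ∀ x, IsNAdic n (F x) ↔ IsNAdic n x) : f '' nAdicPoints n = nAdicPoints n := by
  ext p
  constructor
  · rintro ⟨_, ⟨x, hx, rfl⟩, rfl⟩
    exact ⟨F x, (hD x).2 hx, hf x⟩
  · rintro ⟨y, hy, rfl⟩
    obtain ⟨x, rfl⟩ := hF y
    exact ⟨x, ⟨x, (hD x).1 hy, rfl⟩, hf x⟩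

/-- The orbit `F^[k] 0` increases strictly, so it stays in `(0, 1)` for `0 < k < m`. -/
lemma IsLift.orderOf_eq (hf : IsLift f F) (hlt : ∀ x, x < F x) {m : ℕ}
    (hm : ∀ x, F^[m] x = x + 1) : orderOf f = m := by
  have hm0 : 0 < m := Nat.pos_of_ne_zero (by rintro rfl; simpa using hm 0)
  have horbit : StrictMono fun k => F^[k] 0 :=
    strictMono_nat_of_lt_succ fun k => by simpa only [iterate_succ_apply'] using hlt _
  rw [orderOf_eq_iff hm0]
  refine ⟨Homeomorph.ext fun p => ?_, fun k hkm hk0 hk => ?_⟩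
  · obtain ⟨x, rfl⟩ := QuotientAddGroup.mk_surjective p
    change (f ^ m) x = x
    rw [hf.pow m x, hm x, AddCircle.coe_add, AddCircle.coe_period, add_zero]
  · have h0 : ((F^[k] 0 : ℝ) : Circle) = ((0 : ℝ) : Circle) := by
      rw [← hf.pow k 0, hk]
      rfl
    have hmem : F^[k] 0 ∈ Ico (0 : ℝ) (0 + 1) := by
      refine ⟨(horbit hk0).le, ?_⟩
      simpa [hm 0] using horbit hkm
    exact (horbit hk0).ne' ((AddCircle.coe_eq_coe_iff_of_mem_Ico hmem (by simp)).1 h0)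

def circleMapOfLift (F : ℝ → ℝ) (hF : ∀ x, F (x + 1) = F x + 1) : Circle → Circle :=
  Periodic.lift (f := fun x => ((F x : ℝ) : Circle)) fun x => by simp [hF]

lemma continuous_circleMapOfLift (hc : Continuous F) (hF : ∀ x, F (x + 1) = F x + 1) :
    Continuous (circleMapOfLift F hF) :=
  continuous_coinduced_dom.2 ((AddCircle.continuous_mk' 1).comp hc)

lemma orderIso_symm_add_one (e : ℝ ≃o ℝ) (he : ∀ x, e (x + 1) = e x + 1) (x : ℝ) :
    e.symm (x + 1) = e.symm x + 1 :=
  e.symm_apply_eq.2 (by rw [he, e.apply_symm_apply])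

def homeomorphOfLift (e : ℝ ≃o ℝ) (he : ∀ x, e (x + 1) = e x + 1) : Circle ≃ₜ Circle where
  toFun := circleMapOfLift e he
  invFun := circleMapOfLift e.symm (orderIso_symm_add_one e he)
  left_inv p := by
    obtain ⟨x, rfl⟩ := QuotientAddGroup.mk_surjective p
    exact congrArg _ (e.symm_apply_apply x)
  right_inv p := by
    obtain ⟨x, rfl⟩ := QuotientAddGroup.mk_surjective p
    exact congrArg _ (e.apply_symm_apply x)
  continuous_toFun := continuous_circleMapOfLift e.continuous he
  continuous_invFun := continuous_circleMapOfLift e.symm.continuous _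

lemma isLift_homeomorphOfLift (e : ℝ ≃o ℝ) (he : ∀ x, e (x + 1) = e x + 1) :
    IsLift (homeomorphOfLift e he) e := fun _ => rfl

end Lifts

section DegreeOneExtension

def degOneExt (g : ℝ → ℝ) (x : ℝ) : ℝ := ⌊x⌋ + g (Int.fract x)

variable {g : ℝ → ℝ}

lemma degOneExt_add_int (g : ℝ → ℝ) (x : ℝ) (k : ℤ) :
    degOneExt g (x + k) = degOneExt g x + k := by
  simp only [degOneExt, Int.floor_add_intCast, Int.fract_add_intCast, Int.cast_add]
  ring

lemma degOneExt_add_one (g : ℝ → ℝ) (x : ℝ) : degOneExt g (x + 1) = degOneExt g x + 1 := by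
  exact_mod_cast degOneExt_add_int g x 1

lemma degOneExt_of_mem_Icc (h1 : g 1 = g 0 + 1) {x : ℝ} (hx : x ∈ Icc (0 : ℝ) 1) :
    degOneExt g x = g x := by
  rcases hx.2.eq_or_lt with rfl | hx1
  · simp [degOneExt, h1, add_comm]
  · simp [degOneExt, Int.floor_eq_zero_iff.2 ⟨hx.1, hx1⟩, Int.fract_eq_self.2 ⟨hx.1, hx1⟩]

lemma continuous_degOneExt (hg : ContinuousOn g (Icc 0 1)) (h1 : g 1 = g 0 + 1) :
    Continuous (degOneExt g) := by
  have hform : degOneExt g = fun x => x + (fun y => g y - y) (Int.fract x) := by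
    funext x
    simp only [degOneExt]
    linarith [Int.floor_add_fract x]
  rw [hform]
  exact continuous_id.add ((hg.sub continuousOn_id).comp_fract'' (by simp [h1]))

lemma strictMono_degOneExt (hg : StrictMonoOn g (Icc 0 1)) (h1 : g 1 = g 0 + 1) :
    StrictMono (degOneExt g) := by
  intro x y hxy
  have hx : Int.fract x ∈ Icc (0 : ℝ) 1 := ⟨Int.fract_nonneg x, (Int.fract_lt_one x).le⟩
  have hy : Int.fract y ∈ Icc (0 : ℝ) 1 := ⟨Int.fract_nonneg y, (Int.fract_lt_one y).le⟩
  rcases (Int.floor_mono hxy.le).eq_or_lt with hfl | hfl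
  · have hfr : Int.fract x < Int.fract y := by
      rw [Int.fract, Int.fract, hfl]
      linarith
    simp only [degOneExt, hfl]
    linarith [hg hx hy hfr]
  · have hfl' : (⌊x⌋ : ℝ) + 1 ≤ ⌊y⌋ := by exact_mod_cast hfl
    have hgx : g (Int.fract x) < g 1 := hg hx ⟨zero_le_one, le_rfl⟩ (Int.fract_lt_one x)
    have hgy : g 0 ≤ g (Int.fract y) := hg.monotoneOn ⟨le_rfl, zero_le_one⟩ hy hy.1
    simp only [degOneExt]
    linarith

lemma surjective_degOneExt (hc : ContinuousOn g (Icc 0 1)) (hg : StrictMonoOn g (Icc 0 1))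
    (h1 : g 1 = g 0 + 1) : Surjective (degOneExt g) :=
  let F : CircleDeg1Lift :=
    ⟨⟨degOneExt g, (strictMono_degOneExt hg h1).monotone⟩, degOneExt_add_one g⟩
  F.continuous_iff_surjective.1 (continuous_degOneExt hc h1)

lemma degOneExt_mem_iff {S : Subring ℝ} (hS : ∀ y, g y ∈ S ↔ y ∈ S) (x : ℝ) :
    degOneExt g x ∈ S ↔ x ∈ S := by
  rw [degOneExt, add_mem_cancel_left (intCast_mem S _), hS, Int.fract, sub_eq_add_neg,
    add_mem_cancel_right (neg_mem (intCast_mem S _))]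

end DegreeOneExtension

/-- Every point of `[a, 1)` is the `F`-image of a point of `[0, 1)` at least `ε` further left,
so `G y = y + 1` spreads from `[0, a)` to `[0, 1)` through `G ∘ F = F ∘ G`. -/
lemma eq_add_one_of_commute {F G : ℝ → ℝ} {a ε : ℝ} (hε : 0 < ε)
    (hcomm : Function.Commute F G) (hF : ∀ x, F (x + 1) = F x + 1)
    (hpre : ∀ y ∈ Ico a 1, ∃ x ∈ Icc 0 (y - ε), F x = y)
    (hbase : ∀ x ∈ Ico 0 a, G x = x + 1) {y : ℝ} (hy : y ∈ Ico 0 1) : G y = y + 1 := by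
  suffices h : ∀ k : ℕ, ∀ y ∈ Ico (0 : ℝ) 1, y < a + k * ε → G y = y + 1 by
    obtain ⟨k, hk⟩ := exists_nat_gt ((1 - a) / ε)
    rw [div_lt_iff₀ hε] at hk
    exact h k y hy (by linarith [hy.2])
  intro k
  induction k with
  | zero => exact fun y hy hya => hbase y ⟨hy.1, by simpa using hya⟩
  | succ k ih =>
    intro y hy hyk
    rcases lt_or_ge y a with hya | hya
    · exact hbase y ⟨hy.1, hya⟩
    obtain ⟨x, hx, rfl⟩ := hpre y ⟨hya, hy.2⟩
    have hGx : G x = x + 1 :=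
      ih x ⟨hx.1, by linarith [hx.2, hy.2]⟩ (by push_cast at hyk; linarith [hx.2])
    rw [← hF, ← hGx, hcomm x]

lemma piecewiseNAffine_of_affine_on_Icc {n : ℕ} {F : ℝ → ℝ} (hF : ∀ x, F (x + 1) = F x + 1)
    (s : ℤ) (c : ℝ) (h : ∀ x ∈ Icc (0 : ℝ) 1, F x = (n : ℝ) ^ s * x + c) :
    PiecewiseNAffine n F :=
  ⟨hF, 1, fun i => i, fun _ => s, fun _ => c, one_pos, Nat.cast_zero, Nat.cast_one,
    fun i _ => by simp, fun i _ => ⟨i, 0, by simp⟩,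
    fun i hi x hx => h x (by simpa [Nat.lt_one_iff.1 hi] using hx)⟩

lemma one_mem_TnSet (n : ℕ) : (1 : Circle ≃ₜ Circle) ∈ TnSet n :=
  ⟨image_id _, id, strictMono_id, fun _ => rfl,
    piecewiseNAffine_of_affine_on_Icc (fun _ => rfl) 0 0 fun x _ => by simp⟩

section CycleMap

variable (M : ℕ)

/-- The three affine pieces are the active ones on `[0, 1 - 2⁻ᴹ]`, `[1 - 2⁻ᴹ, 1 - 2⁻ᴹ⁻¹]` and
`[1 - 2⁻ᴹ⁻¹, 1]` respectively. -/
def cycleProfile (y : ℝ) : ℝ :=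
  max (max ((y + 1) / 2) (y + 1 / 2 ^ (M + 1))) (2 ^ M * (y - 1) + 3 / 2)

variable {M}

lemma cycleProfile_eq (y : ℝ) : cycleProfile M y =
    max (max ((y + 1) / 2) (y + 1 / 2 ^ M / 2)) (2 ^ M * (y - 1) + 3 / 2) := by
  rw [cycleProfile, pow_succ, div_div]

lemma cycleProfile_of_le {y : ℝ} (hy : y ≤ 1 - 1 / 2 ^ M) :
    cycleProfile M y = (y + 1) / 2 := by
  have hNu : (2 : ℝ) ^ M * (1 / 2 ^ M) = 1 := mul_one_div_cancel (by positivity)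
  have hN : (1 : ℝ) ≤ 2 ^ M := one_le_pow₀ one_le_two
  have hu : (0 : ℝ) < 1 / 2 ^ M := by positivity
  rw [cycleProfile_eq]
  generalize (2 : ℝ) ^ M = N at *
  generalize 1 / N = u at *
  rw [max_eq_left (le_max_of_le_left ?_), max_eq_left (by linarith)]
  nlinarith [mul_nonneg (by linarith : (0 : ℝ) ≤ N - 1 / 2) (by linarith : 0 ≤ 1 - u - y)]

lemma cycleProfile_of_mem_Icc {y : ℝ} (hy : y ∈ Icc (1 - 1 / 2 ^ M) (1 - 1 / 2 ^ (M + 1))) :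
    cycleProfile M y = y + 1 / 2 ^ (M + 1) := by
  have hNu : (2 : ℝ) ^ M * (1 / 2 ^ M) = 1 := mul_one_div_cancel (by positivity)
  have hN : (1 : ℝ) ≤ 2 ^ M := one_le_pow₀ one_le_two
  obtain ⟨hy1, hy2⟩ := hy
  rw [pow_succ, ← div_div] at *
  rw [cycleProfile_eq]
  generalize (2 : ℝ) ^ M = N at *
  generalize 1 / N = u at *
  rw [max_eq_left (le_max_of_le_right ?_), max_eq_right (by linarith)]
  nlinarith [mul_nonneg (by linarith : (0 : ℝ) ≤ N - 1) (by linarith : 0 ≤ 1 - u / 2 - y)]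

lemma cycleProfile_of_ge {y : ℝ} (hy : 1 - 1 / 2 ^ (M + 1) ≤ y) :
    cycleProfile M y = 2 ^ M * (y - 1) + 3 / 2 := by
  have hNu : (2 : ℝ) ^ M * (1 / 2 ^ M) = 1 := mul_one_div_cancel (by positivity)
  have hN : (1 : ℝ) ≤ 2 ^ M := one_le_pow₀ one_le_two
  have hu : (0 : ℝ) < 1 / 2 ^ M := by positivity
  rw [pow_succ, ← div_div] at hy
  rw [cycleProfile_eq]
  generalize (2 : ℝ) ^ M = N at *
  generalize 1 / N = u at *
  rw [max_eq_right (max_le ?_ ?_)]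
  · nlinarith [mul_nonneg (by linarith : (0 : ℝ) ≤ N - 1 / 2) (by linarith : 0 ≤ y - 1 + u / 2)]
  · nlinarith [mul_nonneg (by linarith : (0 : ℝ) ≤ N - 1) (by linarith : 0 ≤ y - 1 + u / 2)]

variable (M) in
lemma strictMono_cycleProfile : StrictMono (cycleProfile M) := by
  intro a b h
  exact max_lt_max (max_lt_max (by linarith) (by linarith)) (by gcongr)

variable (M) in
lemma continuous_cycleProfile : Continuous (cycleProfile M) := by
  unfold cycleProfile
  fun_prop

lemma cycleProfile_zero : cycleProfile M 0 = 1 / 2 := by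
  have hu1 : 1 / (2 : ℝ) ^ M ≤ 1 := div_le_one_of_le₀ (one_le_pow₀ one_le_two) (by positivity)
  rw [cycleProfile_of_le (sub_nonneg.2 hu1)]
  norm_num

lemma cycleProfile_one : cycleProfile M 1 = cycleProfile M 0 + 1 := by
  rw [cycleProfile_zero, cycleProfile_of_ge (by simp)]
  norm_num

lemma add_le_cycleProfile (y : ℝ) : y + 1 / 2 ^ (M + 1) ≤ cycleProfile M y :=
  le_max_of_le_left (le_max_right _ _)

lemma cycleProfile_mem_nAdicSubring_iff (y : ℝ) :
    cycleProfile M y ∈ nAdicSubring 2 ↔ y ∈ nAdicSubring 2 := by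
  let P : ℝ → Prop := (· ∈ nAdicSubring 2 ↔ y ∈ nAdicSubring 2)
  refine max_rec' P (max_rec' P ?_ ?_) ?_
  · have : (y + 1) / 2 = ((2 : ℕ) : ℝ) ^ (-1 : ℤ) * y + 1 / 2 := by norm_num; ring
    rw [this]
    exact affine_mem_nAdicSubring_iff _ (mem_nAdicSubring.2 ⟨1, 1, by norm_num⟩) y
  · have : y + 1 / 2 ^ (M + 1) = ((2 : ℕ) : ℝ) ^ (0 : ℤ) * y + 1 / 2 ^ (M + 1) := by simp
    rw [this]
    exact affine_mem_nAdicSubring_iff _ (mem_nAdicSubring.2 ⟨1, M + 1, by simp⟩) y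
  · have : (2 : ℝ) ^ M * (y - 1) + 3 / 2 = ((2 : ℕ) : ℝ) ^ (M : ℤ) * y + (3 / 2 - 2 ^ M) := by
      norm_num; ring
    rw [this]
    refine affine_mem_nAdicSubring_iff _ (sub_mem ?_ ?_) y
    · exact mem_nAdicSubring.2 ⟨3, 1, by norm_num⟩
    · exact mem_nAdicSubring.2 ⟨2 ^ M, 0, by simp⟩

variable (M) in
def cycleLift : ℝ → ℝ := degOneExt (cycleProfile M)

lemma cycleLift_add_one (x : ℝ) : cycleLift M (x + 1) = cycleLift M x + 1 :=
  degOneExt_add_one _ x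

lemma cycleLift_of_mem_Icc {x : ℝ} (hx : x ∈ Icc (0 : ℝ) 1) :
    cycleLift M x = cycleProfile M x :=
  degOneExt_of_mem_Icc cycleProfile_one hx

lemma cycleLift_zero : cycleLift M 0 = 1 / 2 := by
  rw [cycleLift_of_mem_Icc ⟨le_rfl, zero_le_one⟩, cycleProfile_zero]

variable (M) in
lemma strictMono_cycleLift : StrictMono (cycleLift M) :=
  strictMono_degOneExt ((strictMono_cycleProfile M).strictMonoOn _) cycleProfile_one

variable (M) in
lemma surjective_cycleLift : Surjective (cycleLift M) :=
  surjective_degOneExt (continuous_cycleProfile M).continuousOn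
    ((strictMono_cycleProfile M).strictMonoOn _) cycleProfile_one

lemma add_le_cycleLift (x : ℝ) : x + 1 / 2 ^ (M + 1) ≤ cycleLift M x := by
  have := add_le_cycleProfile (M := M) (Int.fract x)
  unfold cycleLift degOneExt
  linarith [Int.floor_add_fract x]

lemma cycleLift_iterate_of_le {j : ℕ} (hj : j ≤ M) {x : ℝ} (hx : x ∈ Icc (0 : ℝ) (1 / 2)) :
    (cycleLift M)^[j] x = 1 - (1 - x) / 2 ^ j := by
  induction j with
  | zero => simp
  | succ j ih =>
    rw [iterate_succ_apply', ih (by omega)]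
    have hle : 1 / 2 ^ M ≤ (1 - x) / (2 : ℝ) ^ j :=
      calc 1 / 2 ^ M ≤ 1 / (2 : ℝ) ^ (j + 1) := one_div_pow_le_one_div_pow_of_le one_le_two hj
        _ = 1 / 2 / 2 ^ j := by rw [pow_succ']; ring
        _ ≤ (1 - x) / 2 ^ j := by gcongr; linarith [hx.2]
    have hpos : 0 ≤ (1 - x) / (2 : ℝ) ^ j := div_nonneg (by linarith [hx.2]) (by positivity)
    have hle' : (1 - x) / (2 : ℝ) ^ j ≤ 1 :=
      div_le_one_of_le₀ (by linarith [hx.1, one_le_pow₀ (M₀ := ℝ) (n := j) one_le_two])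
        (by positivity)
    rw [cycleLift_of_mem_Icc ⟨by linarith, by linarith⟩, cycleProfile_of_le (by linarith),
      pow_succ]
    ring

lemma cycleLift_iterate_of_mem_Icc {x : ℝ} (hx : x ∈ Icc (0 : ℝ) (1 / 2)) :
    (cycleLift M)^[M + 2] x = x + 1 := by
  rw [iterate_succ_apply', iterate_succ_apply', cycleLift_iterate_of_le le_rfl hx]
  have hNu : (2 : ℝ) ^ M * (1 / 2 ^ M) = 1 := mul_one_div_cancel (by positivity)
  have hu : (0 : ℝ) < 1 / 2 ^ M := by positivity
  have hu1 : 1 / (2 : ℝ) ^ M ≤ 1 := div_le_one_of_le₀ (one_le_pow₀ one_le_two) (by positivity)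
  have hε : 1 / (2 : ℝ) ^ (M + 1) = 1 / 2 ^ M / 2 := by rw [pow_succ]; ring
  have hdiv : (1 - x) / (2 : ℝ) ^ M = (1 - x) * (1 / 2 ^ M) := by ring
  obtain ⟨hx0, hx1⟩ := hx
  set y := 1 - (1 - x) / (2 : ℝ) ^ M with hy_def
  have hy : cycleLift M y = y + 1 / 2 ^ (M + 1) := by
    rw [cycleLift_of_mem_Icc ⟨by nlinarith, by nlinarith⟩,
      cycleProfile_of_mem_Icc ⟨by nlinarith, by nlinarith⟩]
  rw [hy, cycleLift_of_mem_Icc ⟨by nlinarith, by nlinarith⟩, cycleProfile_of_ge (by nlinarith),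
    hε, hy_def, hdiv]
  generalize (2 : ℝ) ^ M = N at *
  generalize 1 / N = u at *
  linear_combination (x - 1 / 2) * hNu

lemma cycleLift_iterate (x : ℝ) : (cycleLift M)^[M + 2] x = x + 1 := by
  have hint : Function.Commute (cycleLift M)^[M + 2] (· + (⌊x⌋ : ℝ)) :=
    Function.Commute.iterate_left (fun y => degOneExt_add_int _ y _) _
  have hpre : ∀ y ∈ Ico (1 / 2 : ℝ) 1, ∃ z ∈ Icc 0 (y - 1 / 2 ^ (M + 1)), cycleLift M z = y := by
    intro y hy
    obtain ⟨z, rfl⟩ := surjective_cycleLift M y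
    refine ⟨z, ⟨?_, ?_⟩, rfl⟩
    · rw [← (strictMono_cycleLift M).le_iff_le, cycleLift_zero]
      exact hy.1
    · rw [← (strictMono_cycleLift M).le_iff_le]
      simpa using add_le_cycleLift (M := M) (cycleLift M z - 1 / 2 ^ (M + 1))
  have hfract := eq_add_one_of_commute (by positivity) (Function.Commute.self_iterate _ (M + 2))
    cycleLift_add_one hpre (fun y hy => cycleLift_iterate_of_mem_Icc ⟨hy.1, hy.2.le⟩)
    ⟨Int.fract_nonneg x, Int.fract_lt_one x⟩
  rw [← Int.fract_add_floor x, hint (Int.fract x), hfract]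
  ring

lemma piecewiseNAffine_cycleLift_zero : PiecewiseNAffine 2 (cycleLift 0) :=
  piecewiseNAffine_of_affine_on_Icc cycleLift_add_one 0 (1 / 2) fun x hx => by
    have hle : (x + 1) / 2 ≤ x + 1 / 2 := by linarith [hx.1]
    rw [cycleLift_of_mem_Icc hx, cycleProfile, max_eq_right (by norm_num [hle]; linarith)]
    norm_num
    ring

variable (M) in
lemma piecewiseNAffine_cycleLift_succ : PiecewiseNAffine 2 (cycleLift (M + 1)) := by
  have hε : (1 : ℝ) / 2 ^ (M + 1 + 1) < 1 / 2 ^ (M + 1) :=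
    one_div_pow_lt_one_div_pow_of_lt one_lt_two (by omega)
  have hε1 : (1 : ℝ) / 2 ^ (M + 1) < 1 := by
    rw [div_lt_one (by positivity)]; exact one_lt_pow₀ one_lt_two (by omega)
  have hε0 : (0 : ℝ) < 1 / 2 ^ (M + 1 + 1) := by positivity
  refine ⟨cycleLift_add_one, 3,
    fun | 0 => 0 | 1 => 1 - 1 / 2 ^ (M + 1) | 2 => 1 - 1 / 2 ^ (M + 1 + 1) | _ => 1,
    fun | 0 => -1 | 1 => 0 | _ => (M + 1 : ℕ),
    fun | 0 => 1 / 2 | 1 => 1 / 2 ^ (M + 1 + 1) | _ => 3 / 2 - 2 ^ (M + 1),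
    by norm_num, rfl, rfl, fun i hi => ?_, fun i hi => ?_, fun i hi x hx => ?_⟩
  · interval_cases i <;> simp only [Nat.reduceAdd] <;> linarith
  · have h1 : (1 : ℝ) ∈ nAdicSubring 2 := one_mem _
    have hpow (k : ℕ) : (1 : ℝ) / 2 ^ k ∈ nAdicSubring 2 := mem_nAdicSubring.2 ⟨1, k, by simp⟩
    interval_cases i
    · exact ⟨0, 0, by simp⟩
    · exact sub_mem h1 (hpow _)
    · exact sub_mem h1 (hpow _)
    · exact h1
  · interval_cases i <;> simp only [Nat.reduceAdd] at hx ⊢ <;>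
      rw [cycleLift_of_mem_Icc ⟨by linarith [hx.1], by linarith [hx.2]⟩]
    · rw [cycleProfile_of_le hx.2]
      norm_num
      ring
    · rw [cycleProfile_of_mem_Icc hx]
      norm_num
    · rw [cycleProfile_of_ge hx.1, zpow_natCast]
      push_cast
      ring

variable (M) in
lemma piecewiseNAffine_cycleLift : PiecewiseNAffine 2 (cycleLift M) := by
  cases M
  exacts [piecewiseNAffine_cycleLift_zero, piecewiseNAffine_cycleLift_succ _]

variable (M) in
def cycleHomeomorph : Circle ≃ₜ Circle :=
  homeomorphOfLift ((strictMono_cycleLift M).orderIsoOfSurjective _ (surjective_cycleLift M))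
    cycleLift_add_one

variable (M) in
lemma isLift_cycleHomeomorph : IsLift (cycleHomeomorph M) (cycleLift M) :=
  isLift_homeomorphOfLift _ _

variable (M) in
lemma cycleHomeomorph_mem_TnSet : cycleHomeomorph M ∈ TnSet 2 :=
  ⟨(isLift_cycleHomeomorph M).image_nAdicPoints (surjective_cycleLift M)
      (degOneExt_mem_iff cycleProfile_mem_nAdicSubring_iff),
    cycleLift M, strictMono_cycleLift M, isLift_cycleHomeomorph M, piecewiseNAffine_cycleLift M⟩

variable (M) in
lemma orderOf_cycleHomeomorph : orderOf (cycleHomeomorph M) = M + 2 :=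
  (isLift_cycleHomeomorph M).orderOf_eq
    (fun x => lt_of_lt_of_le (by simp) (add_le_cycleLift x)) cycleLift_iterate

end CycleMap

/-- For every positive integer `m`, Thompson's group `T = T_2` contains
an element of order exactly `m`. -/
theorem T2_contains_all_orders (m : ℕ) (hm : 1 ≤ m) :
    ∃ f : Circle ≃ₜ Circle, f ∈ TnSet 2 ∧ orderOf f = m := by
  obtain rfl | hm2 := hm.eq_or_lt
  · exact ⟨1, one_mem_TnSet 2, orderOf_one⟩
  · obtain ⟨M, rfl⟩ : ∃ M, m = M + 2 := ⟨m - 2, by omega⟩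
    exact ⟨cycleHomeomorph M, cycleHomeomorph_mem_TnSet M, orderOf_cycleHomeomorph M⟩

end ThompsonPaper
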